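/- Let n ≥ 1, 1 ≤ k ≤ n−1, and 1 ≤ s ≤ n−2 with gcd(n, s) = 1. Then there exists an s-overlap cycle of all binary words of length n with exactly k ones: there is a function f : ZMod (C(n,k)·(n−s)) → Bool such that the map sending each t ∈ Fin C(n,k) to the word (j : Fin n) ↦ f(t·(n−s) + j) is a bijection from Fin C(n,k) onto the set of words w : Fin n → Bool with exactly k coordinates equal to true. -/

import Mathlib

def weight {n : ℕ} (w : Fin n → Bool) : ℕ :=
  (Finset.univ.filter fun i => w i = true).card

/-!
Read a word of weight `k` as an edge from its prefix of length `s` to its suffix of length `s`.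
An `s`-overlap cycle is an Eulerian circuit of this multigraph, i.e. a permutation `π` of the
edges forming a single cycle with `prefix (π w) = suffix w`. Rotation by `n - s` is such a
permutation, so the graph is balanced, and Euler's argument applies to a connected one: a
permutation of this kind with the most pairs of edges in a common cycle is a single cycle,
because swapping the successors of two edges with the same suffix that lie in different cycles
merges the two cycles. For connectivity, the position permutations keeping every word in its
component form a subgroup. It contains rotation by `n - s`, hence rotation by one since
`gcd (n - s) n = 1`, and the transposition of positions `s` and `s + 1`, which fixes the prefix;
these generate all of `Perm (Fin n)`, which is transitive on the words of weight `k`.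
-/

open Equiv Equiv.Perm Function Relation Finset

theorem Relation.ReflTransGen.exists_rel_of_pos_of_neg {α : Type*} {r : α → α → Prop}
    {p : α → Prop} {a b : α} (h : ReflTransGen r a b) (ha : p a) (hb : ¬p b) :
    ∃ u v, p u ∧ ¬p v ∧ r u v := by
  induction h with
  | refl => exact absurd ha hb
  | @tail c d _ hcd ih =>
    by_cases hc : p c
    · exact ⟨c, d, hc, hb, hcd⟩
    · exact ih hc

namespace Equiv.Perm

variable {α : Type*} [Finite α] {π σ : Perm α} {a b x y : α}

theorem SameCycle.mem_of_forall_ne_apply_mem {U : Set α} (hab : π.SameCycle a b)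
    (hU : ∀ c ∈ U, c ≠ b → π c ∈ U) (ha : a ∈ U) : b ∈ U := by
  obtain ⟨i, hi⟩ := hab.exists_nat_pow_eq
  clear hab
  induction i generalizing a with
  | zero => rwa [← hi]
  | succ i ih =>
    by_cases hb : a = b
    · rwa [← hb]
    · exact ih (hU a ha hb) (by rwa [pow_succ, mul_apply] at hi)

theorem SameCycle.of_forall_sameCycle_apply (hab : π.SameCycle a b)
    (h : ∀ c, σ.SameCycle c (π c)) : σ.SameCycle a b :=
  hab.mem_of_forall_ne_apply_mem (U := {c | σ.SameCycle a c}) (fun c hc _ => hc.trans (h c))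
    SameCycle.rfl

variable [DecidableEq α]

theorem sameCycle_mul_swap (hxy : ¬π.SameCycle x y) : (π * swap x y).SameCycle x y := by
  have hy : π.SameCycle (π y) y := sameCycle_apply_left.2 SameCycle.rfl
  -- The `π`-orbit from `π y = (π * swap x y) x` back to `y` avoids `x`; on it both maps agree.
  refine (hy.mem_of_forall_ne_apply_mem
    (U := {c | (π * swap x y).SameCycle x c ∧ π.SameCycle y c}) ?_ ?_).1
  · rintro c ⟨hxc, hyc⟩ hcy
    have hcx : c ≠ x := by rintro rfl; exact hxy hyc.symm
    have hc : π c = (π * swap x y) c := by rw [mul_apply, swap_apply_of_ne_of_ne hcx hcy]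
    exact ⟨hc ▸ sameCycle_apply_right.2 hxc, sameCycle_apply_right.2 hyc⟩
  · have hx : (π * swap x y) x = π y := by rw [mul_apply, swap_apply_left]
    exact ⟨hx ▸ sameCycle_apply_right.2 SameCycle.rfl, sameCycle_apply_right.2 SameCycle.rfl⟩

theorem SameCycle.mul_swap (hab : π.SameCycle a b) (hxy : ¬π.SameCycle x y) :
    (π * swap x y).SameCycle a b := by
  refine hab.of_forall_sameCycle_apply fun c => ?_
  have hmerge := sameCycle_mul_swap hxy
  rcases eq_or_ne c x with rfl | hcx
  · simpa using sameCycle_apply_right.2 hmerge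
  rcases eq_or_ne c y with rfl | hcy
  · simpa using sameCycle_apply_right.2 hmerge.symm
  · have hc : (π * swap x y) c = π c := by rw [mul_apply, swap_apply_of_ne_of_ne hcx hcy]
    exact hc ▸ sameCycle_apply_right.2 SameCycle.rfl

end Equiv.Perm

section Euler

variable {E V : Type*}

def EdgesMeet (src dst : E → V) (u v : E) : Prop :=
  ∃ z, (src u = z ∨ dst u = z) ∧ (src v = z ∨ dst v = z)

instance (src dst : E → V) : Std.Symm (EdgesMeet src dst) where
  symm _ _ := fun ⟨z, hu, hv⟩ => ⟨z, hv, hu⟩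

variable {src dst : E → V} {π : Perm E}

theorem exists_sameCycle_dst_eq (hπ : ∀ e, src (π e) = dst e) {u : E} {z : V}
    (hu : src u = z ∨ dst u = z) : ∃ x, π.SameCycle u x ∧ dst x = z := by
  rcases hu with hu | hu
  · exact ⟨π.symm u, sameCycle_symm_apply_right.2 SameCycle.rfl,
      by rw [← hπ, apply_symm_apply, hu]⟩
  · exact ⟨u, SameCycle.rfl, hu⟩

theorem exists_dst_eq_not_sameCycle (hπ : ∀ e, src (π e) = dst e)
    (hconn : ∀ a b, ReflTransGen (EdgesMeet src dst) a b) {a b : E} (hab : ¬π.SameCycle a b) :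
    ∃ x y, dst x = dst y ∧ ¬π.SameCycle x y := by
  obtain ⟨u, v, hu, hv, z, huz, hvz⟩ := (hconn a b).exists_rel_of_pos_of_neg SameCycle.rfl hab
  obtain ⟨x, hux, rfl⟩ := exists_sameCycle_dst_eq hπ huz
  obtain ⟨y, hvy, hxy⟩ := exists_sameCycle_dst_eq hπ hvz
  exact ⟨x, y, hxy.symm, fun h => hv ((hu.trans hux).trans (h.trans hvy.symm))⟩

theorem src_mul_swap_apply [DecidableEq E] (hπ : ∀ e, src (π e) = dst e) {x y : E}
    (hxy : dst x = dst y) (e : E) : src ((π * swap x y) e) = dst e := by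
  rw [mul_apply, hπ, swap_apply_def]
  split_ifs with hx hy <;> simp [*]

theorem exists_isCycleOn_univ_of_reflTransGen [Fintype E] (ρ : Perm E)
    (hρ : ∀ e, src (ρ e) = dst e) (hconn : ∀ a b, ReflTransGen (EdgesMeet src dst) a b) :
    ∃ π : Perm E, (∀ e, src (π e) = dst e) ∧ π.IsCycleOn Set.univ := by
  classical
  let sameCyclePairs (π : Perm E) : Finset (E × E) := univ.filter fun p => π.SameCycle p.1 p.2
  obtain ⟨π, hπ, hmax⟩ :=
    (univ.filter fun π : Perm E => ∀ e, src (π e) = dst e).exists_max_image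
      (fun π => #(sameCyclePairs π)) ⟨ρ, by simpa using hρ⟩
  simp only [mem_filter, mem_univ, true_and] at hπ hmax
  refine ⟨π, hπ, Set.bijOn_univ.2 π.bijective, fun a _ b _ => ?_⟩
  by_contra hab
  obtain ⟨x, y, hdst, hxy⟩ := exists_dst_eq_not_sameCycle hπ hconn hab
  have hgrow : sameCyclePairs π ⊂ sameCyclePairs (π * swap x y) := by
    refine (ssubset_iff_of_subset fun p hp => ?_).2 ⟨(x, y), ?_, ?_⟩
    · simp only [sameCyclePairs, mem_filter, mem_univ, true_and] at hp ⊢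
      exact hp.mul_swap hxy
    · simpa [sameCyclePairs] using sameCycle_mul_swap hxy
    · simpa [sameCyclePairs] using hxy
  exact (hmax _ (src_mul_swap_apply hπ hdst)).not_gt (card_lt_card hgrow)

end Euler

section CycleOnUniv

variable {α : Type*} [Fintype α] {f : Perm α}

theorem periodic_pow_apply_of_isCycleOn_univ (hf : f.IsCycleOn Set.univ) (a : α) :
    Periodic (fun i : ℕ => (f ^ i) a) (Fintype.card α) := fun i => by
  have hf' : f.IsCycleOn (Finset.univ : Finset α) := by simpa using hf
  simp only [pow_add, mul_apply, ← card_univ, hf'.pow_card_apply (mem_univ a)]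

theorem bijective_pow_apply_of_isCycleOn_univ (hf : f.IsCycleOn Set.univ) {N : ℕ}
    (hN : Fintype.card α = N) (a : α) : Bijective fun i : Fin N => (f ^ (i : ℕ)) a := by
  subst hN
  have hf' : f.IsCycleOn (Finset.univ : Finset α) := by simpa using hf
  refine (Fintype.bijective_iff_injective_and_card _).2 ⟨fun i j h => Fin.ext ?_, by simp⟩
  exact ((hf'.pow_apply_eq_pow_apply (mem_univ a)).1 h).eq_of_lt_of_lt i.2 j.2

end CycleOnUniv

section Words

variable {α : Type*} {n s : ℕ}

def wordPrefix (hs : s ≤ n) (w : Fin n → α) : Fin s → α := fun i => w (Fin.castLE hs i)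

def wordSuffix (hs : s ≤ n) (w : Fin n → α) : Fin s → α :=
  fun i => w ⟨n - s + i, by omega⟩

theorem val_finRotate_pow_of_add_lt {m : ℕ} {i : Fin n} (h : i + m < n) :
    ((finRotate n ^ m) i : ℕ) = i + m := by
  induction m with
  | zero => simp
  | succ m ih =>
    have : NeZero n := ⟨by omega⟩
    have him : ((finRotate n ^ m) i : ℕ) + 1 < n := by rw [ih (by omega)]; omega
    rw [pow_succ', mul_apply, finRotate_apply, Fin.val_add_one_of_lt' him, ih (by omega),
      Nat.add_assoc]

theorem wordPrefix_comp_finRotate_pow (hs : s ≤ n) (w : Fin n → α) :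
    wordPrefix hs (w ∘ ⇑(finRotate n ^ (n - s))) = wordSuffix hs w := by
  ext i
  have hi : (Fin.castLE hs i : ℕ) + (n - s) < n := by rw [Fin.val_castLE]; omega
  simp only [wordPrefix, wordSuffix, comp_apply]
  congr 1
  ext
  rw [val_finRotate_pow_of_add_lt hi, Fin.val_castLE, Nat.add_comm]

theorem wordPrefix_comp_swap (hs : s ≤ n) (w : Fin n → α) {x y : Fin n} (hx : s ≤ x)
    (hy : s ≤ y) : wordPrefix hs (w ∘ ⇑(swap x y)) = wordPrefix hs w := by
  ext i
  have hne (z : Fin n) (hz : s ≤ z) : Fin.castLE hs i ≠ z := fun h => by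
    have := congrArg Fin.val h
    simp only [Fin.val_castLE] at this
    omega
  simp only [wordPrefix, comp_apply, swap_apply_of_ne_of_ne (hne x hx) (hne y hy)]

end Words

section WeightWords

variable {n : ℕ}

theorem weight_comp_perm (σ : Perm (Fin n)) (w : Fin n → Bool) :
    weight (w ∘ σ) = weight w := by
  simp only [weight, ← Fintype.card_subtype]
  exact Fintype.card_congr (σ.subtypeEquiv fun _ => Iff.rfl)

theorem card_weight_eq (n k : ℕ) :
    Fintype.card {w : Fin n → Bool // weight w = k} = n.choose k := by
  let e : (Fin n → Bool) ≃ Finset (Fin n) :=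
    { toFun w := univ.filter fun i => w i = true
      invFun t i := decide (i ∈ t)
      left_inv w := by ext; simp
      right_inv t := by ext; simp }
  calc Fintype.card {w : Fin n → Bool // weight w = k}
      _ = Fintype.card {t : Finset (Fin n) // t.card = k} :=
        Fintype.card_congr (e.subtypeEquiv fun _ => Iff.rfl)
      _ = n.choose k := by rw [Fintype.card_finset_len, Fintype.card_fin]

theorem exists_perm_comp_eq_of_weight_eq {u v : Fin n → Bool} (h : weight u = weight v) :
    ∃ σ : Perm (Fin n), u ∘ σ = v := by
  have hcard : Fintype.card {i // v i = true} = Fintype.card {i // u i = true} := by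
    simpa only [weight, Fintype.card_subtype] using h.symm
  let e := Fintype.equivOfCardEq hcard
  refine ⟨e.extendSubtype, funext fun i => ?_⟩
  by_cases hi : v i = true
  · simpa [hi] using e.extendSubtype_mem i hi
  · simpa [hi] using e.extendSubtype_not_mem i hi

def permPositions (k : ℕ) (σ : Perm (Fin n)) : Perm {w : Fin n → Bool // weight w = k} where
  toFun w := ⟨w.1 ∘ σ, (weight_comp_perm σ w.1).trans w.2⟩
  invFun w := ⟨w.1 ∘ σ.symm, (weight_comp_perm σ.symm w.1).trans w.2⟩
  left_inv w := by ext; simp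
  right_inv w := by ext; simp

end WeightWords

section Connectivity

variable {n s : ℕ} (hs : s ≤ n) (k : ℕ)

abbrev weightWordsMeet :
    {w : Fin n → Bool // weight w = k} → {w : Fin n → Bool // weight w = k} → Prop :=
  EdgesMeet (fun w => wordPrefix hs w.1) (fun w => wordSuffix hs w.1)

def meetComponentStabilizer : Subgroup (Perm (Fin n)) where
  carrier := {σ | ∀ w, ReflTransGen (weightWordsMeet hs k) w (permPositions k σ w)}
  mul_mem' hσ hτ w := (hσ w).trans (hτ _)
  one_mem' _ := .refl
  inv_mem' {σ} hσ w := by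
    have hw : permPositions k σ (permPositions k σ⁻¹ w) = w := Subtype.ext (by ext; simp [permPositions])
    have h := hσ (permPositions k σ⁻¹ w)
    rw [hw] at h
    exact Std.Symm.symm _ _ h

theorem reflTransGen_weightWordsMeet (hsn : s + 1 < n) (hcop : (n - s).Coprime n)
    (u v : {w : Fin n → Bool // weight w = k}) : ReflTransGen (weightWordsMeet hs k) u v := by
  have hn : 2 ≤ n := by omega
  set H := meetComponentStabilizer hs k
  have hrot : finRotate n ^ (n - s) ∈ H := fun w =>
    .single ⟨wordSuffix hs w.1, Or.inr rfl, Or.inl (wordPrefix_comp_finRotate_pow hs w.1)⟩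
  have horder : orderOf (finRotate n) = n := by
    rw [(isCycle_finRotate_of_le hn).orderOf, support_finRotate_of_le hn, card_univ,
      Fintype.card_fin]
  have hgen : finRotate n ∈ H :=
    Subgroup.zpowers_le.2 hrot (mem_zpowers_pow_iff.2 (by rwa [horder]))
  let x : Fin n := ⟨s, by omega⟩
  have hx : (finRotate n x : ℕ) = s + 1 := by
    simpa using val_finRotate_pow_of_add_lt (m := 1) (i := x) (by simp [x]; omega)
  have hswap : swap x (finRotate n x) ∈ H := fun w =>
    .single ⟨wordPrefix hs w.1, Or.inl rfl,
      Or.inl (wordPrefix_comp_swap hs w.1 le_rfl (hx ▸ Nat.le_succ s))⟩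
  have htop : H = ⊤ := by
    rw [eq_top_iff, ← closure_cycle_adjacent_swap (isCycle_finRotate_of_le hn)
      (support_finRotate_of_le hn) x, Subgroup.closure_le]
    exact Set.insert_subset hgen (Set.singleton_subset_iff.2 hswap)
  obtain ⟨σ, hσ⟩ := exists_perm_comp_eq_of_weight_eq (u.2.trans v.2.symm)
  have huv : permPositions k σ u = v := Subtype.ext hσ
  exact huv ▸ (htop ▸ Subgroup.mem_top σ : σ ∈ H) u

end Connectivity

section Concat

variable {α : Type*} {n s : ℕ}

def overlapConcat (N : ℕ) (hs : s < n) (G : ℕ → Fin n → α) : ZMod (N * (n - s)) → α :=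
  fun p => G (p.val / (n - s))
    ⟨p.val % (n - s), (Nat.mod_lt _ (by omega)).trans_le (Nat.sub_le n s)⟩

theorem apply_mul_add_of_wordSuffix_eq (hs : s ≤ n) {G : ℕ → Fin n → α}
    (hG : ∀ a, wordSuffix hs (G a) = wordPrefix hs (G (a + 1))) (t q r : ℕ)
    (h : q * (n - s) + r < n) :
    G t ⟨q * (n - s) + r, h⟩ = G (t + q) ⟨r, (Nat.le_add_left r _).trans_lt h⟩ := by
  induction q generalizing t with
  | zero => simp
  | succ q ih =>
    have hi : q * (n - s) + r < s := by rw [Nat.succ_mul] at h; omega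
    calc G t ⟨(q + 1) * (n - s) + r, h⟩ = wordSuffix hs (G t) ⟨q * (n - s) + r, hi⟩ := by
          simp only [wordSuffix]; congr 2; rw [Nat.succ_mul]; omega
      _ = G (t + 1) ⟨q * (n - s) + r, by omega⟩ := by rw [hG]; rfl
      _ = G (t + (q + 1)) ⟨r, _⟩ := by rw [ih, Nat.add_assoc, Nat.add_comm 1]

theorem overlapConcat_window {N : ℕ} (hs : s < n) {G : ℕ → Fin n → α} (hper : Periodic G N)
    (hG : ∀ a, wordSuffix hs.le (G a) = wordPrefix hs.le (G (a + 1))) (t : ℕ) (j : Fin n) :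
    overlapConcat N hs G
      (((t * (n - s) : ℕ) : ZMod (N * (n - s))) + ((j : ℕ) : ZMod (N * (n - s)))) = G t j := by
  have hj : j / (n - s) * (n - s) + j % (n - s) < n := by rw [Nat.div_add_mod']; exact j.2
  have hval : (((t * (n - s) : ℕ) : ZMod (N * (n - s))) + ((j : ℕ) : ZMod (N * (n - s)))).val
      = (t * (n - s) + j) % (N * (n - s)) := by
    rw [← Nat.cast_add, ZMod.val_natCast]
  have hdiv : (t * (n - s) + j) / (n - s) = t + j / (n - s) := by
    rw [Nat.add_comm, Nat.add_mul_div_right _ _ (by omega), Nat.add_comm]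
  calc _ = G (t + j / (n - s)) ⟨j % (n - s), (Nat.le_add_left _ _).trans_lt hj⟩ := by
        simp only [overlapConcat, hval, Nat.mod_mul_left_div_self, hdiv, hper.map_mod_nat,
          Nat.mod_mul_left_mod, Nat.mul_add_mod_self_right]
    _ = G t ⟨j / (n - s) * (n - s) + j % (n - s), hj⟩ :=
        (apply_mul_add_of_wordSuffix_eq hs.le hG t _ _ hj).symm
    _ = G t j := by simp only [Nat.div_add_mod']

end Concat

theorem exists_s_overlap_cycle_ksubsets_general (n k s : ℕ)
    (hk2 : k ≤ n - 1) (hs1 : 1 ≤ s) (hs2 : s ≤ n - 2)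
    (hgcd : Nat.gcd n s = 1) :
    ∃ f : ZMod (n.choose k * (n - s)) → Bool,
      Function.Injective
        (fun t : Fin (n.choose k) => fun j : Fin n =>
          f ((((t : ℕ) * (n - s) : ℕ) : ZMod (n.choose k * (n - s)))
              + ((j : ℕ) : ZMod (n.choose k * (n - s))))) ∧
      Set.range
        (fun t : Fin (n.choose k) => fun j : Fin n =>
          f ((((t : ℕ) * (n - s) : ℕ) : ZMod (n.choose k * (n - s)))
              + ((j : ℕ) : ZMod (n.choose k * (n - s))))) =
        {w : Fin n → Bool | weight w = k} := by
  have hs : s < n := by omega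
  have hcop : (n - s).Coprime n := (Nat.coprime_self_sub_left hs.le).2 (Nat.coprime_comm.1 hgcd)
  obtain ⟨π, hπ, hcycle⟩ := exists_isCycleOn_univ_of_reflTransGen
    (permPositions k (finRotate n ^ (n - s))) (fun w => wordPrefix_comp_finRotate_pow hs.le w.1)
    (reflTransGen_weightWordsMeet hs.le k (by omega) hcop)
  have hcard := card_weight_eq n k
  obtain ⟨w₀⟩ : Nonempty {w : Fin n → Bool // weight w = k} :=
    Fintype.card_pos_iff.1 (hcard ▸ Nat.choose_pos (by omega))
  let G : ℕ → Fin n → Bool := fun a => ((π ^ a) w₀).1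
  have hper : Periodic G (n.choose k) := by
    simpa [G, hcard] using (periodic_pow_apply_of_isCycleOn_univ hcycle w₀).comp Subtype.val
  have hG : ∀ a, wordSuffix hs.le (G a) = wordPrefix hs.le (G (a + 1)) := fun a => by
    simp only [G, pow_succ', mul_apply, hπ]
  have hbij := bijective_pow_apply_of_isCycleOn_univ hcycle hcard w₀
  refine ⟨overlapConcat _ hs G, ?_⟩
  simp only [overlapConcat_window hs hper hG]
  refine ⟨Subtype.val_injective.comp hbij.1, ?_⟩
  change Set.range (Subtype.val ∘ fun t : Fin _ => (π ^ (t : ℕ)) w₀) = _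
  rw [Set.range_comp, hbij.2.range_eq, Set.image_univ, Subtype.range_coe_subtype]

/-- For `n ≥ 1`, `1 ≤ k ≤ n - 1`, `1 ≤ s ≤ n - 2` with `gcd n s = 1`, there exists an
`s`-overlap cycle of all binary words of length `n` with exactly `k` ones:
a cyclic binary sequence of length `(n choose k) * (n - s)` whose windows at starting
positions `t * (n - s)` enumerate, without repetition, exactly the binary words of
length `n` with exactly `k` coordinates equal to `true`. -/
theorem exists_s_overlap_cycle_ksubsets (n k s : ℕ) (hn : 1 ≤ n)
    (hk1 : 1 ≤ k) (hk2 : k ≤ n - 1) (hs1 : 1 ≤ s) (hs2 : s ≤ n - 2)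
    (hgcd : Nat.gcd n s = 1) :
    ∃ f : ZMod (n.choose k * (n - s)) → Bool,
      Function.Injective
        (fun t : Fin (n.choose k) => fun j : Fin n =>
          f ((((t : ℕ) * (n - s) : ℕ) : ZMod (n.choose k * (n - s)))
              + ((j : ℕ) : ZMod (n.choose k * (n - s))))) ∧
      Set.range
        (fun t : Fin (n.choose k) => fun j : Fin n =>
          f ((((t : ℕ) * (n - s) : ℕ) : ZMod (n.choose k * (n - s)))
              + ((j : ℕ) : ZMod (n.choose k * (n - s))))) =
        {w : Fin n → Bool | weight w = k} :=
  exists_s_overlap_cycle_ksubsets_general n k s hk2 hs1 hs2 hgcd
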